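/- arXiv:1312.7434 — 4 statements merged into one kernel-verified Lean document; each statement's English description precedes it below -/
import Mathlib

section
/- Let m ≥ 1 be an integer, H a finite simple graph, and S a minimum dominating set of K_m ⊠ H. If s₀ is a vertex of H of degree one and t₀ is the neighbor of s₀ in H, then |S ∩ (V(K_m) × {s₀, t₀})| = 1. -/
open SimpleGraph Finset

/-- `D` is a dominating set of `G`: every vertex is in `D` or adjacent to a vertex of `D`. -/
def SimpleGraph.IsDominatingSet {V : Type*} (G : SimpleGraph V) (D : Set V) : Prop :=
  ∀ v : V, v ∈ D ∨ ∃ u ∈ D, G.Adj u v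

/-- The domination number of a finite graph. -/
noncomputable def SimpleGraph.dominationNumber {V : Type*} [Fintype V]
    (G : SimpleGraph V) : ℕ :=
  sInf {k | ∃ D : Finset V, D.card = k ∧ G.IsDominatingSet ↑D}

/-- The bondage number of a finite graph: the least size of a set of edges whose removal
increases the domination number. -/
noncomputable def SimpleGraph.bondageNumber {V : Type*} [Fintype V]
    (G : SimpleGraph V) : ℕ :=
  sInf {k | ∃ Z : Finset (Sym2 V), Z.card = k ∧ (↑Z : Set (Sym2 V)) ⊆ G.edgeSet ∧
    G.dominationNumber < (G.deleteEdges ↑Z).dominationNumber}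

/-- The strong product of two simple graphs. -/
def SimpleGraph.strongProd {V W : Type*} (G : SimpleGraph V) (H : SimpleGraph W) :
    SimpleGraph (V × W) :=
  SimpleGraph.fromRel (fun a b =>
    (a.1 = b.1 ∧ H.Adj a.2 b.2) ∨ (G.Adj a.1 b.1 ∧ a.2 = b.2) ∨
      (G.Adj a.1 b.1 ∧ H.Adj a.2 b.2))

infixl:70 " ⊠ " => SimpleGraph.strongProd

/-- **Lemma.** Let `S` be a minimum dominating set of `K_m ⊠ H`. If `s₀` is a vertex of `H`
of degree one and `t₀` is its neighbor in `H`, then `|S ∩ (V(K_m) × {s₀, t₀})| = 1`. -/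
theorem card_min_dominating_inter_pendant {W : Type*} [Fintype W] [DecidableEq W]
    (m : ℕ) (hm : 1 ≤ m) (H : SimpleGraph W) [DecidableRel H.Adj]
    (S : Finset (Fin m × W))
    (hdom : ((⊤ : SimpleGraph (Fin m)) ⊠ H).IsDominatingSet ↑S)
    (hmin : S.card = ((⊤ : SimpleGraph (Fin m)) ⊠ H).dominationNumber)
    (s₀ t₀ : W) (hdeg : H.degree s₀ = 1) (hadj : H.Adj s₀ t₀) :
    (S.filter (fun p => p.2 = s₀ ∨ p.2 = t₀)).card = 1 := by
  classical
  set G := ((⊤ : SimpleGraph (Fin m)) ⊠ H) with hG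
  have i0 : Fin m := ⟨0, hm⟩
  have hst : s₀ ≠ t₀ := H.ne_of_adj hadj
  -- the only neighbor of s₀ is t₀
  have hnbr : ∀ w, H.Adj s₀ w → w = t₀ := by
    intro w hw
    have hcard : (H.neighborFinset s₀).card = 1 := hdeg
    obtain ⟨a, ha⟩ := Finset.card_eq_one.mp hcard
    have h1 : w ∈ H.neighborFinset s₀ := by rwa [SimpleGraph.mem_neighborFinset]
    have h2 : t₀ ∈ H.neighborFinset s₀ := by rwa [SimpleGraph.mem_neighborFinset]
    rw [ha, Finset.mem_singleton] at h1 h2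
    rw [h1, h2]
  -- adjacency in the strong product forces snd equality or H-adjacency
  have adj_snd : ∀ a b : Fin m × W, G.Adj a b → a.2 = b.2 ∨ H.Adj a.2 b.2 := by
    intro a b hab
    rw [hG] at hab
    rw [SimpleGraph.strongProd, SimpleGraph.fromRel_adj] at hab
    obtain ⟨-, h | h⟩ := hab
    · rcases h with ⟨_, h⟩ | ⟨_, h⟩ | ⟨_, h⟩
      · exact Or.inr h
      · exact Or.inl h
      · exact Or.inr h
    · rcases h with ⟨_, h⟩ | ⟨_, h⟩ | ⟨_, h⟩
      · exact Or.inr h.symm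
      · exact Or.inl h.symm
      · exact Or.inr h.symm
  -- building adjacencies from (i0, t₀)
  have adj_mk : ∀ (i : Fin m) (w : W), H.Adj t₀ w → G.Adj (i0, t₀) (i, w) := by
    intro i w hw
    rw [hG, SimpleGraph.strongProd, SimpleGraph.fromRel_adj]
    refine ⟨?_, ?_⟩
    · intro h
      exact H.ne_of_adj hw (congrArg Prod.snd h)
    · by_cases hi : i0 = i
      · exact Or.inl (Or.inl ⟨hi, hw⟩)
      · exact Or.inl (Or.inr (Or.inr ⟨by simpa using hi, hw⟩))
  have adj_mk2 : ∀ i : Fin m, i ≠ i0 → G.Adj (i0, t₀) (i, t₀) := by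
    intro i hi
    rw [hG, SimpleGraph.strongProd, SimpleGraph.fromRel_adj]
    refine ⟨?_, Or.inl (Or.inr (Or.inl ⟨by simpa using (Ne.symm hi), rfl⟩))⟩
    intro h
    exact hi (congrArg Prod.fst h).symm
  set F := S.filter (fun p => p.2 = s₀ ∨ p.2 = t₀) with hF
  -- F is nonempty
  have hne : F.Nonempty := by
    rcases hdom (i0, s₀) with h | ⟨u, hu, hadju⟩
    · exact ⟨(i0, s₀), Finset.mem_filter.mpr ⟨h, Or.inl rfl⟩⟩
    · refine ⟨u, Finset.mem_filter.mpr ⟨hu, ?_⟩⟩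
      rcases adj_snd u (i0, s₀) hadju with h | h
      · exact Or.inl h
      · exact Or.inr (hnbr u.2 h.symm)
  have hge : 1 ≤ F.card := Finset.card_pos.mpr hne
  by_contra hcard
  have h2 : 2 ≤ F.card := by omega
  -- build a smaller dominating set
  set S' : Finset (Fin m × W) := insert (i0, t₀) (S \ F) with hS'
  have hFS : F ⊆ S := Finset.filter_subset _ _
  have hcardS' : S'.card < S.card := by
    have h1 : S'.card ≤ (S \ F).card + 1 := Finset.card_insert_le _ _
    have h3 : (S \ F).card = S.card - F.card := Finset.card_sdiff_of_subset hFS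
    have h4 : F.card ≤ S.card := Finset.card_le_card hFS
    omega
  have hmemS' : (i0, t₀) ∈ S' := Finset.mem_insert_self _ _
  have hdomS' : G.IsDominatingSet ↑S' := by
    intro v
    obtain ⟨i, w⟩ := v
    by_cases hw : w = s₀
    · exact Or.inr ⟨(i0, t₀), Finset.mem_coe.mpr hmemS',
        adj_mk i w (by rw [hw]; exact hadj.symm)⟩
    · by_cases hw2 : w = t₀
      · by_cases hi : i = i0
        · left
          rw [hi, hw2]
          exact Finset.mem_coe.mpr hmemS'
        · exact Or.inr ⟨(i0, t₀), Finset.mem_coe.mpr hmemS',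
            by rw [hw2]; exact adj_mk2 i hi⟩
      · rcases hdom (i, w) with h | ⟨u, hu, hadju⟩
        · left
          have hniF : (i, w) ∉ F := by
            simp only [hF, Finset.mem_filter]
            rintro ⟨-, h' | h'⟩ <;> simp_all
          exact Finset.mem_coe.mpr (Finset.mem_insert_of_mem
            (Finset.mem_sdiff.mpr ⟨by simpa using h, hniF⟩))
        · by_cases huF : u ∈ F
          · -- u has second coordinate s₀ or t₀
            have hu2 : u.2 = s₀ ∨ u.2 = t₀ := (Finset.mem_filter.mp huF).2
            have hsnd := adj_snd u (i, w) hadju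
            rcases hu2 with h' | h'
            · rcases hsnd with h'' | h''
              · exact absurd (h''.symm.trans h') hw
              · rw [h'] at h''
                exact absurd (hnbr w h'') hw2
            · rcases hsnd with h'' | h''
              · exact absurd (h''.symm.trans h') hw2
              · rw [h'] at h''
                exact Or.inr ⟨(i0, t₀), Finset.mem_coe.mpr hmemS', adj_mk i w h''⟩
          · exact Or.inr ⟨u, Finset.mem_coe.mpr (Finset.mem_insert_of_mem
              (Finset.mem_sdiff.mpr ⟨by simpa using hu, huF⟩)), hadju⟩
  have hle : G.dominationNumber ≤ S'.card := by
    apply Nat.sInf_le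
    exact ⟨S', rfl, hdomS'⟩
  omega
end

section
/- Let S = S(n₁, n₂, …, n_l) be a starlike tree with center c, let D be a dominating set of S, let P_{n_i} be the i-th branch of S, and let P̃_{n_i} be the augmented branch, i.e., the subtree of S induced by {c} ∪ V(P_{n_i}). If n_i ≡ 1 (mod 3), then |D ∩ V(P_{n_i})| ≥ ⌈n_i/3⌉ − 1 and |D ∩ V(P̃_{n_i})| ≥ ⌈n_i/3⌉. -/
open SimpleGraph Finset

infixl:70 " ⊠ " => SimpleGraph.strongProd

/-- The starlike tree `S(n₁, …, n_l)`: a center vertex `none` together with `l` disjoint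
paths (the branches), where the `j`-th vertex of the `i`-th branch is `some ⟨i, j⟩` and
the first vertex `some ⟨i, 0⟩` of each branch is adjacent to the center. -/
def starlikeTree (l : ℕ) (nb : Fin l → ℕ) :
    SimpleGraph (Option ((i : Fin l) × Fin (nb i))) :=
  SimpleGraph.fromRel (fun a b =>
    (∃ (i : Fin l) (j : Fin (nb i)), a = none ∧ b = some ⟨i, j⟩ ∧ (j : ℕ) = 0) ∨
    (∃ (i : Fin l) (j k : Fin (nb i)),
      a = some ⟨i, j⟩ ∧ b = some ⟨i, k⟩ ∧ (j : ℕ) + 1 = (k : ℕ)))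

/-!
Each vertex of the `i`-th branch is dominated either by a vertex of `D` on that branch, which
dominates at most three branch vertices, or by the center, which dominates only the first one.
Hence `n_i ≤ 3 |D ∩ V(P_{n_i})| + [center ∈ D]`, and for `n_i = 3m + 1` both bounds follow.
-/

theorem Finset.card_le_three_mul_card_of_forall_exists_near {β : Type*} {s : Finset ℕ}
    {t : Finset β} (f : β → ℕ) (h : ∀ j ∈ s, ∃ b ∈ t, j ≤ f b + 1 ∧ f b ≤ j + 1) :
    #s ≤ 3 * #t := by
  classical
  calc #s ≤ #(t.biUnion fun b => Icc (f b - 1) (f b + 1)) := card_le_card fun j hj => by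
          obtain ⟨b, hb, hjb, hbj⟩ := h j hj
          exact mem_biUnion.2 ⟨b, hb, mem_Icc.2 ⟨by omega, hjb⟩⟩
    _ ≤ ∑ b ∈ t, #(Icc (f b - 1) (f b + 1)) := card_biUnion_le
    _ ≤ ∑ _b ∈ t, 3 := sum_le_sum fun b _ => by rw [Nat.card_Icc]; omega
    _ = 3 * #t := by rw [sum_const, smul_eq_mul, mul_comm]

namespace starlikeTree

variable {l : ℕ} {nb : Fin l → ℕ}

theorem eq_none_or_exists_of_adj {u : Option ((i : Fin l) × Fin (nb i))} {i : Fin l}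
    {j : Fin (nb i)} (h : (starlikeTree l nb).Adj u (some ⟨i, j⟩)) :
    (u = none ∧ (j : ℕ) = 0) ∨
      ∃ k : Fin (nb i), u = some ⟨i, k⟩ ∧ (j : ℕ) ≤ k + 1 ∧ (k : ℕ) ≤ j + 1 := by
  rw [starlikeTree, fromRel_adj] at h
  obtain ⟨-, (⟨i', j', hu, hb, hj'⟩ | ⟨i', j', k', hu, hb, hjk⟩) |
    (⟨i', j', hb, -⟩ | ⟨i', j', k', hb, hu, hjk⟩)⟩ := h
  · obtain ⟨rfl, hj⟩ := Sigma.mk.inj_iff.1 (Option.some_inj.1 hb)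
    cases hj
    exact .inl ⟨hu, hj'⟩
  · obtain ⟨rfl, hj⟩ := Sigma.mk.inj_iff.1 (Option.some_inj.1 hb)
    cases hj
    exact .inr ⟨j', hu, by omega, by omega⟩
  · cases hb
  · obtain ⟨rfl, hj⟩ := Sigma.mk.inj_iff.1 (Option.some_inj.1 hb)
    cases hj
    exact .inr ⟨k', hu, by omega, by omega⟩

def branchIndex : Option ((i : Fin l) × Fin (nb i)) → ℕ
  | none => 0
  | some p => p.2

theorem exists_mem_branch_near {D : Finset (Option ((i : Fin l) × Fin (nb i)))}
    (hdom : (starlikeTree l nb).IsDominatingSet ↑D) {i : Fin l} (j : Fin (nb i))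
    (hj : (j : ℕ) ≠ 0 ∨ none ∉ D) :
    ∃ x ∈ D.filter (fun x => ∃ k : Fin (nb i), x = some ⟨i, k⟩),
      (j : ℕ) ≤ branchIndex x + 1 ∧ branchIndex x ≤ j + 1 := by
  rcases hdom (some ⟨i, j⟩) with hjD | ⟨u, huD, hadj⟩
  · exact ⟨_, mem_filter.2 ⟨hjD, j, rfl⟩, by simp [branchIndex]⟩
  rcases eq_none_or_exists_of_adj hadj with ⟨rfl, hj0⟩ | ⟨k, rfl, hjk, hkj⟩
  · exact absurd huD (hj.resolve_left (not_not_intro hj0))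
  · exact ⟨_, mem_filter.2 ⟨huD, k, rfl⟩, hjk, hkj⟩

theorem card_le_three_mul_card_branch {D : Finset (Option ((i : Fin l) × Fin (nb i)))}
    (hdom : (starlikeTree l nb).IsDominatingSet ↑D) (i : Fin l) {s : Finset ℕ}
    (hs : ∀ j ∈ s, j < nb i ∧ (j ≠ 0 ∨ none ∉ D)) :
    #s ≤ 3 * #(D.filter (fun x => ∃ k : Fin (nb i), x = some ⟨i, k⟩)) :=
  card_le_three_mul_card_of_forall_exists_near branchIndex fun j hj =>
    exists_mem_branch_near hdom ⟨j, (hs j hj).1⟩ (hs j hj).2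

end starlikeTree

theorem dominating_starlikeTree_branch_mod_one_general (l : ℕ) (nb : Fin l → ℕ)
    (D : Finset (Option ((i : Fin l) × Fin (nb i))))
    (hdom : (starlikeTree l nb).IsDominatingSet ↑D)
    (i : Fin l) (hi : nb i % 3 = 1) :
    (nb i + 2) / 3 - 1 ≤
      (D.filter (fun x => ∃ j : Fin (nb i), x = some ⟨i, j⟩)).card ∧
    (nb i + 2) / 3 ≤
      (D.filter (fun x => x = none ∨ ∃ j : Fin (nb i), x = some ⟨i, j⟩)).card := by
  set D₁ := D.filter (fun x => ∃ j : Fin (nb i), x = some ⟨i, j⟩)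
  set D₂ := D.filter (fun x => x = none ∨ ∃ j : Fin (nb i), x = some ⟨i, j⟩)
  have h₁ : #((range (nb i)).erase 0) ≤ 3 * #D₁ :=
    starlikeTree.card_le_three_mul_card_branch hdom i
      fun j hj => ⟨mem_range.1 (mem_of_mem_erase hj), .inl (ne_of_mem_erase hj)⟩
  rw [card_erase_of_mem (mem_range.2 (by omega)), card_range] at h₁
  have hD₁₂ : D₁ ⊆ D₂ := monotone_filter_right D fun _ _ => Or.inr
  refine ⟨by omega, ?_⟩
  by_cases hc : none ∈ D
  · have : #(insert none D₁) ≤ #D₂ :=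
      card_le_card (insert_subset (mem_filter.2 ⟨hc, .inl rfl⟩) hD₁₂)
    rw [card_insert_of_notMem (by simp [D₁])] at this
    omega
  · have h₂ : #(range (nb i)) ≤ 3 * #D₁ :=
      starlikeTree.card_le_three_mul_card_branch hdom i fun j hj => ⟨mem_range.1 hj, .inr hc⟩
    rw [card_range] at h₂
    have := card_le_card hD₁₂
    omega

/-- **Lemma.** Let `D` be a dominating set of the starlike tree `S(n₁, …, n_l)`.
If `n_i ≡ 1 (mod 3)`, then `|D ∩ V(P_{n_i})| ≥ ⌈n_i/3⌉ - 1` and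
`|D ∩ V(P̃_{n_i})| ≥ ⌈n_i/3⌉`, where `P_{n_i}` is the `i`-th branch and `P̃_{n_i}` is the
augmented branch (the branch together with the center). -/
theorem dominating_starlikeTree_branch_mod_one (l : ℕ) (nb : Fin l → ℕ)
    (hnb : ∀ i, 1 ≤ nb i)
    (D : Finset (Option ((i : Fin l) × Fin (nb i))))
    (hdom : (starlikeTree l nb).IsDominatingSet ↑D)
    (i : Fin l) (hi : nb i % 3 = 1) :
    (nb i + 2) / 3 - 1 ≤
      (D.filter (fun x => ∃ j : Fin (nb i), x = some ⟨i, j⟩)).card ∧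
    (nb i + 2) / 3 ≤
      (D.filter (fun x => x = none ∨ ∃ j : Fin (nb i), x = some ⟨i, j⟩)).card :=
  dominating_starlikeTree_branch_mod_one_general l nb D hdom i hi
end

section
/- Let S = S(n₁, n₂, …, n_l) be a starlike tree with center c, let D be a dominating set of S, let P_{n_i} be the i-th branch of S with first vertex x₁^i (the vertex of the branch adjacent to c). (b) If n_i ≡ 2 (mod 3), then |D ∩ V(P_{n_i})| ≥ ⌈n_i/3⌉. (c) If n_i ≡ 0 (mod 3), then |D ∩ (V(P_{n_i}) \ {x₁^i})| ≥ ⌈n_i/3⌉ = n_i/3. -/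
open SimpleGraph Finset

infixl:70 " ⊠ " => SimpleGraph.strongProd

/-!
A vertex `x_t` of a branch other than its first vertex has only branch neighbours, so some
vertex of `D` lies in `{x_{t-1}, x_t, x_{t+1}}`. Choosing `t = 3k + 1` (resp. `t = 3k + 2`)
for `k < ⌈n_i/3⌉` (the residue of `n_i` keeps `t` inside the branch) yields vertices of `D`
in the pairwise disjoint index blocks `[3k, 3k + 2]` (resp. `[3k + 1, 3k + 3]`, which avoid
the first vertex).
-/

theorem Finset.le_card_of_forall_exists_mem_block {α : Type*} (T : Finset α) (f : α → ℕ)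
    (a b m : ℕ) (h : ∀ k < m, ∃ x ∈ T, b * k + a ≤ f x ∧ f x < b * (k + 1) + a) :
    m ≤ #T := by
  calc m = #(range m) := (card_range m).symm
    _ ≤ #T := card_le_card_of_surjOn (fun x => (f x - a) / b) fun k hk => by
      obtain ⟨x, hx, hlo, hhi⟩ := h k (mem_range.mp hk)
      exact ⟨x, hx, Nat.div_eq_of_lt_le (by rw [mul_comm]; omega) (by rw [mul_comm]; omega)⟩

section StarlikeTree

variable {l : ℕ} {nb : Fin l → ℕ}

lemma starlikeTree_adj_none_some {v : (i : Fin l) × Fin (nb i)} :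
    (starlikeTree l nb).Adj none (some v) ↔ (v.2 : ℕ) = 0 := by
  obtain ⟨i, j⟩ := v
  simp only [starlikeTree, fromRel_adj]
  aesop

lemma starlikeTree_adj_some_some {v w : (i : Fin l) × Fin (nb i)} :
    (starlikeTree l nb).Adj (some v) (some w) ↔
      v.1 = w.1 ∧ ((v.2 : ℕ) + 1 = w.2 ∨ (w.2 : ℕ) + 1 = v.2) := by
  obtain ⟨i, j⟩ := v
  obtain ⟨i', j'⟩ := w
  simp only [starlikeTree, fromRel_adj]
  aesop

lemma SimpleGraph.IsDominatingSet.exists_mem_branch_near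
    {D : Set (Option ((i : Fin l) × Fin (nb i)))} (hdom : (starlikeTree l nb).IsDominatingSet D)
    {i : Fin l} {t : ℕ} (ht₀ : 0 < t) (ht : t < nb i) :
    ∃ j : Fin (nb i), some ⟨i, j⟩ ∈ D ∧ t ≤ j + 1 ∧ (j : ℕ) ≤ t + 1 := by
  rcases hdom (some ⟨i, ⟨t, ht⟩⟩) with hmem | ⟨_ | ⟨i', j⟩, hu, hadj⟩
  · exact ⟨⟨t, ht⟩, hmem, t.le_succ, t.le_succ⟩
  · exact absurd (starlikeTree_adj_none_some.mp hadj) ht₀.ne'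
  · obtain ⟨rfl, hj⟩ := starlikeTree_adj_some_some.mp hadj
    dsimp only at hj
    exact ⟨j, hu, by omega, by omega⟩

end StarlikeTree

theorem dominating_starlikeTree_branch_mod_two_zero_general (l : ℕ) (nb : Fin l → ℕ)
    (D : Finset (Option ((i : Fin l) × Fin (nb i))))
    (hdom : (starlikeTree l nb).IsDominatingSet ↑D) (i : Fin l) :
    (nb i % 3 = 2 →
      (nb i + 2) / 3 ≤ (D.filter (fun x => ∃ j : Fin (nb i), x = some ⟨i, j⟩)).card) ∧
    (nb i % 3 = 0 →
      (nb i + 2) / 3 ≤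
        (D.filter (fun x => ∃ j : Fin (nb i), (j : ℕ) ≠ 0 ∧ x = some ⟨i, j⟩)).card ∧
      (nb i + 2) / 3 = nb i / 3) := by
  let index : Option ((i : Fin l) × Fin (nb i)) → ℕ := fun x => x.elim 0 fun v => v.2
  refine ⟨fun h₂ => ?_, fun h₀ => ⟨?_, by omega⟩⟩
  · refine le_card_of_forall_exists_mem_block _ index 0 3 _ fun k hk => ?_
    obtain ⟨j, hj, hlo, hhi⟩ :=
      hdom.exists_mem_branch_near (i := i) (t := 3 * k + 1) (by omega) (by omega)
    exact ⟨_, mem_filter.mpr ⟨hj, j, rfl⟩, by simp only [index, Option.elim_some]; omega⟩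
  · refine le_card_of_forall_exists_mem_block _ index 1 3 _ fun k hk => ?_
    obtain ⟨j, hj, hlo, hhi⟩ :=
      hdom.exists_mem_branch_near (i := i) (t := 3 * k + 2) (by omega) (by omega)
    exact ⟨_, mem_filter.mpr ⟨hj, j, by omega, rfl⟩,
      by simp only [index, Option.elim_some]; omega⟩

/-- **Lemma.** Let `D` be a dominating set of the starlike tree `S(n₁, …, n_l)`, and let
`x₁^i = some ⟨i, 0⟩` be the first vertex of the `i`-th branch `P_{n_i}` (the branch vertex
adjacent to the center).
(b) If `n_i ≡ 2 (mod 3)`, then `|D ∩ V(P_{n_i})| ≥ ⌈n_i/3⌉`.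
(c) If `n_i ≡ 0 (mod 3)`, then `|D ∩ (V(P_{n_i}) \ {x₁^i})| ≥ ⌈n_i/3⌉ = n_i/3`. -/
theorem dominating_starlikeTree_branch_mod_two_zero (l : ℕ) (nb : Fin l → ℕ)
    (hnb : ∀ i, 1 ≤ nb i)
    (D : Finset (Option ((i : Fin l) × Fin (nb i))))
    (hdom : (starlikeTree l nb).IsDominatingSet ↑D) (i : Fin l) :
    (nb i % 3 = 2 →
      (nb i + 2) / 3 ≤ (D.filter (fun x => ∃ j : Fin (nb i), x = some ⟨i, j⟩)).card) ∧
    (nb i % 3 = 0 →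
      (nb i + 2) / 3 ≤
        (D.filter (fun x => ∃ j : Fin (nb i), (j : ℕ) ≠ 0 ∧ x = some ⟨i, j⟩)).card ∧
      (nb i + 2) / 3 = nb i / 3) :=
  dominating_starlikeTree_branch_mod_two_zero_general l nb D hdom i
end

section
/- Let S = S(n₁, …, n_l) be a starlike tree whose branches have orders n₁, …, n_l, and suppose exactly r of the nᵢ satisfy nᵢ ≡ 1 (mod 3), exactly s satisfy nᵢ ≡ 2 (mod 3), and exactly t satisfy nᵢ ≡ 0 (mod 3), with l = r + s + t. Then the domination number of S equals: Σᵢ₌₁^l ⌈nᵢ/3⌉ − (r − 1) if r ≥ 1; Σᵢ₌₁^l ⌈nᵢ/3⌉ if r = 0 and s ≥ 1; and Σᵢ₌₁^l ⌈nᵢ/3⌉ + 1 if r = 0 and s = 0. -/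
open SimpleGraph Finset

infixl:70 " ⊠ " => SimpleGraph.strongProd

/-!
A dominating set meets each branch of order `n` in a set dominating the branch minus its first
vertex, a path of order `n - 1`, hence in at least `⌊(n + 1) / 3⌋` vertices; the center together
with such optimal sets on all branches dominates the tree. Without the center some first vertex
must be chosen, which costs a branch of order `≡ 0 (mod 3)` one extra vertex, and a branch of
order `≡ 1` must be dominated on its own, which also costs one extra vertex. When no order is
`≡ 1` but some order is `≡ 2`, dominating every branch on its own, using the first vertex of a
branch of order `≡ 2`, avoids the center at no extra cost. Finally
`⌈n / 3⌉ = ⌊(n + 1) / 3⌋ + [n ≡ 1 (mod 3)]`.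
-/

namespace SimpleGraph

variable {V : Type*} [Fintype V] {G : SimpleGraph V}

theorem dominationNumber_le {D : Finset V} (hD : G.IsDominatingSet D) :
    G.dominationNumber ≤ #D :=
  Nat.sInf_le ⟨D, rfl, hD⟩

theorem le_dominationNumber {k : ℕ} (h : ∀ D : Finset V, G.IsDominatingSet D → k ≤ #D) :
    k ≤ G.dominationNumber :=
  le_csInf ⟨_, univ, rfl, fun v => Or.inl (by simp)⟩
    (by rintro _ ⟨D, rfl, hD⟩; exact h D hD)

end SimpleGraph

/-- `T` dominates the vertices `a, …, n - 1` of the path graph on `ℕ`. -/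
def DominatesIco (T : Finset ℕ) (a n : ℕ) : Prop :=
  ∀ m, a ≤ m → m < n → ∃ d ∈ T, d ≤ m + 1 ∧ m ≤ d + 1

namespace DominatesIco

variable {T : Finset ℕ} {a n : ℕ}

theorem sub_le_three_mul_card (h : DominatesIco T a n) : n - a ≤ 3 * #T := by
  have hcover : Ico a n ⊆ T.biUnion fun d => Icc (d - 1) (d + 1) := by
    intro m hm
    obtain ⟨d, hd, hmd⟩ := h m (mem_Ico.1 hm).1 (mem_Ico.1 hm).2
    exact mem_biUnion.2 ⟨d, hd, mem_Icc.2 (by omega)⟩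
  calc n - a = #(Ico a n) := (Nat.card_Ico a n).symm
    _ ≤ ∑ d ∈ T, #(Icc (d - 1) (d + 1)) := (card_le_card hcover).trans card_biUnion_le
    _ ≤ ∑ _d ∈ T, 3 := sum_le_sum fun d _ => by simp only [Nat.card_Icc]; omega
    _ = 3 * #T := by rw [sum_const, smul_eq_mul, mul_comm]

/-- A dominating vertex at the very end of the segment wastes one of its three neighbours. -/
theorem add_one_le_three_mul_card_of_zero_mem (h : DominatesIco T 1 n) (h0 : 0 ∈ T) :
    n + 1 ≤ 3 * #T := by
  have hrest : DominatesIco (T.erase 0) 2 n := fun m hm hmn => by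
    obtain ⟨d, hd, hmd⟩ := h m (by omega) hmn
    exact ⟨d, mem_erase.2 ⟨by omega, hd⟩, hmd⟩
  have := hrest.sub_le_three_mul_card
  have := card_erase_add_one h0
  omega

end DominatesIco

def tailDominator (n : ℕ) : Finset ℕ :=
  (range ((n + 1) / 3)).image fun k => min (3 * k + 2) (n - 1)

theorem tailDominator_subset (n : ℕ) : tailDominator n ⊆ range n := by
  intro d hd
  obtain ⟨k, hk, rfl⟩ := mem_image.1 hd
  simp only [mem_range] at hk ⊢
  omega

theorem card_tailDominator_le (n : ℕ) : #(tailDominator n) ≤ (n + 1) / 3 :=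
  card_image_le.trans (card_range _).le

theorem dominatesIco_tailDominator (n : ℕ) : DominatesIco (tailDominator n) 1 n :=
  fun m hm hmn => ⟨_, mem_image_of_mem _ (mem_range.2 (show (m - 1) / 3 < (n + 1) / 3 by omega)),
    by omega⟩

def fullDominator (n : ℕ) : Finset ℕ :=
  (range ((n + 1) / 3)).image fun k => 3 * k + (n + 1) % 3

theorem fullDominator_subset (n : ℕ) : fullDominator n ⊆ range n := by
  intro d hd
  obtain ⟨k, hk, rfl⟩ := mem_image.1 hd
  simp only [mem_range] at hk ⊢
  omega

theorem card_fullDominator_le (n : ℕ) : #(fullDominator n) ≤ (n + 1) / 3 :=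
  card_image_le.trans (card_range _).le

theorem dominatesIco_fullDominator {n : ℕ} (hn : n % 3 ≠ 1) :
    DominatesIco (fullDominator n) 0 n := by
  intro m _ hmn
  have hk : (m + 1 - (n + 1) % 3) / 3 < (n + 1) / 3 := by omega
  exact ⟨_, mem_image_of_mem _ (mem_range.2 hk), by omega⟩

theorem zero_mem_fullDominator {n : ℕ} (hn : n % 3 = 2) : 0 ∈ fullDominator n :=
  mem_image.2 ⟨0, mem_range.2 (by omega), by omega⟩

namespace starlikeTree

variable {l : ℕ} {nb : Fin l → ℕ}

theorem adj_none_some {i : Fin l} {j : Fin (nb i)} (hj : (j : ℕ) = 0) :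
    (starlikeTree l nb).Adj none (some ⟨i, j⟩) := by
  rw [starlikeTree, fromRel_adj]
  exact ⟨by simp, Or.inl (Or.inl ⟨i, j, rfl, rfl, hj⟩)⟩

theorem adj_some_some {i : Fin l} {j k : Fin (nb i)} (h : (j : ℕ) + 1 = k) :
    (starlikeTree l nb).Adj (some ⟨i, j⟩) (some ⟨i, k⟩) := by
  rw [starlikeTree, fromRel_adj]
  refine ⟨fun hjk => ?_, Or.inl (Or.inr ⟨i, j, k, rfl, rfl, h⟩)⟩
  rw [eq_of_heq (Sigma.mk.inj_iff.1 (Option.some_inj.1 hjk)).2] at h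
  omega

theorem exists_eq_of_adj_none {u : Option ((i : Fin l) × Fin (nb i))}
    (h : (starlikeTree l nb).Adj u none) :
    ∃ (i : Fin l) (j : Fin (nb i)), u = some ⟨i, j⟩ ∧ (j : ℕ) = 0 := by
  rw [starlikeTree, fromRel_adj] at h
  obtain ⟨-, (⟨_, _, _, hb, -⟩ | ⟨_, _, _, _, hb, -⟩) |
    (⟨i, j, -, hu, hj⟩ | ⟨_, _, _, hb, -, -⟩)⟩ := h
  · exact absurd hb (by simp)
  · exact absurd hb (by simp)
  · exact ⟨i, j, hu, hj⟩
  · exact absurd hb (by simp)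

theorem eq_of_adj_some {u : Option ((i : Fin l) × Fin (nb i))} {i : Fin l} {j : Fin (nb i)}
    (h : (starlikeTree l nb).Adj u (some ⟨i, j⟩)) :
    (u = none ∧ (j : ℕ) = 0) ∨
      ∃ k : Fin (nb i), u = some ⟨i, k⟩ ∧ (k : ℕ) ≤ j + 1 ∧ (j : ℕ) ≤ k + 1 := by
  rw [starlikeTree, fromRel_adj] at h
  obtain ⟨-, (⟨_, j', hu, hb, hj'⟩ | ⟨_, j', k', hu, hb, hjk⟩) | (⟨_, _, hu, -, -⟩ |
    ⟨_, j', k', hb, hu, hjk⟩)⟩ := h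
  · obtain ⟨rfl, hj⟩ := Sigma.mk.inj_iff.1 (Option.some_inj.1 hb.symm)
    exact Or.inl ⟨hu, by rw [← eq_of_heq hj]; exact hj'⟩
  · obtain ⟨rfl, hk⟩ := Sigma.mk.inj_iff.1 (Option.some_inj.1 hb.symm)
    rw [eq_of_heq hk] at hjk
    exact Or.inr ⟨j', hu, by omega⟩
  · exact absurd hu (by simp)
  · obtain ⟨rfl, hj⟩ := Sigma.mk.inj_iff.1 (Option.some_inj.1 hb.symm)
    rw [eq_of_heq hj] at hjk
    exact Or.inr ⟨k', hu, by omega⟩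

def branchTrace (D : Finset (Option ((i : Fin l) × Fin (nb i)))) (i : Fin l) : Finset ℕ :=
  (univ.filter fun j : Fin (nb i) => some ⟨i, j⟩ ∈ D).map Fin.valEmbedding

/-- Positions of `T i` that are `≥ nb i` are dropped. -/
def ofBranchSets (nb : Fin l → ℕ) (T : Fin l → Finset ℕ) :
    Finset (Option ((i : Fin l) × Fin (nb i))) :=
  (univ.sigma fun i => univ.filter fun j : Fin (nb i) => (j : ℕ) ∈ T i).map
    ⟨some, Option.some_injective _⟩

section lower

variable {D : Finset (Option ((i : Fin l) × Fin (nb i)))}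

theorem mem_branchTrace {i : Fin l} (j : Fin (nb i)) :
    (j : ℕ) ∈ branchTrace D i ↔ some ⟨i, j⟩ ∈ D := by
  simp [branchTrace, Fin.val_inj]

theorem sum_card_branchTrace_le (D : Finset (Option ((i : Fin l) × Fin (nb i)))) :
    ∑ i, #(branchTrace D i) ≤ #(D.erase none) := by
  calc ∑ i, #(branchTrace D i)
      = #((univ.sigma fun i => univ.filter fun j : Fin (nb i) => some ⟨i, j⟩ ∈ D).map
          ⟨some, Option.some_injective _⟩) := by simp [branchTrace, card_sigma]
    _ ≤ #(D.erase none) := card_le_card fun v hv => by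
        obtain ⟨⟨i, j⟩, hij, rfl⟩ := mem_map.1 hv
        simpa using hij

theorem dominatesIco_branchTrace (hD : (starlikeTree l nb).IsDominatingSet D) {a : ℕ}
    (ha : 1 ≤ a ∨ none ∉ D) (i : Fin l) : DominatesIco (branchTrace D i) a (nb i) := by
  intro m ham hmn
  rcases hD (some ⟨i, ⟨m, hmn⟩⟩) with hin | ⟨u, hu, hadj⟩
  · exact ⟨m, (mem_branchTrace ⟨m, hmn⟩).2 hin, by omega, by omega⟩
  · rcases eq_of_adj_some hadj with ⟨rfl, hm0⟩ | ⟨k, rfl, hk⟩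
    · rcases ha with ha | hn
      · simp only at hm0
        omega
      · exact absurd hu hn
    · exact ⟨k, (mem_branchTrace k).2 hu, hk⟩

theorem exists_zero_mem_branchTrace (hD : (starlikeTree l nb).IsDominatingSet D)
    (hn : none ∉ D) : ∃ i, 0 ∈ branchTrace D i := by
  rcases hD none with hin | ⟨u, hu, hadj⟩
  · exact absurd hin hn
  · obtain ⟨i, j, rfl, hj⟩ := exists_eq_of_adj_none hadj
    exact ⟨i, hj ▸ (mem_branchTrace j).2 hu⟩

theorem div_three_le_card_branchTrace (hD : (starlikeTree l nb).IsDominatingSet D) (i : Fin l) :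
    (nb i + 1) / 3 ≤ #(branchTrace D i) := by
  have := (dominatesIco_branchTrace hD (Or.inl le_rfl) i).sub_le_three_mul_card
  omega

theorem sum_le_card (hD : (starlikeTree l nb).IsDominatingSet D) :
    ∑ i, (nb i + 1) / 3 ≤ #D :=
  calc ∑ i, (nb i + 1) / 3 ≤ ∑ i, #(branchTrace D i) :=
        sum_le_sum fun i _ => div_three_le_card_branchTrace hD i
    _ ≤ #D := (sum_card_branchTrace_le D).trans card_erase_le

theorem sum_add_one_le_card (hD : (starlikeTree l nb).IsDominatingSet D)
    (h : (∃ i, nb i % 3 = 1) ∨ ∀ i, nb i % 3 = 0) :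
    ∑ i, (nb i + 1) / 3 + 1 ≤ #D := by
  by_cases hn : none ∈ D
  · have := sum_card_branchTrace_le D
    have := card_erase_add_one hn
    have := sum_le_sum fun i (_ : i ∈ univ) => div_three_le_card_branchTrace hD i
    omega
  have hexcess : ∃ i ∈ univ, (nb i + 1) / 3 < #(branchTrace D i) := by
    rcases h with ⟨i, hi⟩ | hall
    · have := (dominatesIco_branchTrace hD (a := 0) (Or.inr hn) i).sub_le_three_mul_card
      exact ⟨i, mem_univ _, by omega⟩
    · obtain ⟨i, hi⟩ := exists_zero_mem_branchTrace hD hn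
      have := (dominatesIco_branchTrace hD (Or.inl le_rfl) i).add_one_le_three_mul_card_of_zero_mem
        hi
      have := hall i
      exact ⟨i, mem_univ _, by omega⟩
  calc ∑ i, (nb i + 1) / 3 + 1 ≤ ∑ i, #(branchTrace D i) :=
        sum_lt_sum (fun i _ => div_three_le_card_branchTrace hD i) hexcess
    _ ≤ #D := (sum_card_branchTrace_le D).trans card_erase_le

end lower

section upper

variable {T : Fin l → Finset ℕ}

@[simp]
theorem some_mem_ofBranchSets {i : Fin l} {j : Fin (nb i)} :
    some ⟨i, j⟩ ∈ ofBranchSets nb T ↔ (j : ℕ) ∈ T i := by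
  simp [ofBranchSets]

theorem card_ofBranchSets_le (T : Fin l → Finset ℕ) :
    #(ofBranchSets nb T) ≤ ∑ i, #(T i) := by
  rw [ofBranchSets, card_map, card_sigma]
  exact sum_le_sum fun i _ => card_le_card_of_injOn Fin.val (fun j hj => by simpa using hj)
    Fin.val_injective.injOn

theorem dominated_of_dominatesIco (hT : ∀ i, T i ⊆ range (nb i)) {a : ℕ} {i : Fin l}
    (hdom : DominatesIco (T i) a (nb i)) {j : Fin (nb i)} (hj : a ≤ j) :
    some ⟨i, j⟩ ∈ ofBranchSets nb T ∨
      ∃ u ∈ ofBranchSets nb T, (starlikeTree l nb).Adj u (some ⟨i, j⟩) := by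
  obtain ⟨d, hd, hdj⟩ := hdom j hj j.isLt
  have hdn : d < nb i := mem_range.1 (hT i hd)
  rcases lt_trichotomy d j with hlt | rfl | hgt
  · exact Or.inr ⟨some ⟨i, ⟨d, hdn⟩⟩, some_mem_ofBranchSets.2 hd,
      adj_some_some (show d + 1 = j by omega)⟩
  · exact Or.inl (some_mem_ofBranchSets.2 hd)
  · exact Or.inr ⟨some ⟨i, ⟨d, hdn⟩⟩, some_mem_ofBranchSets.2 hd,
      (adj_some_some (show (j : ℕ) + 1 = d by omega)).symm⟩

theorem isDominatingSet_insert_none_ofBranchSets (hT : ∀ i, T i ⊆ range (nb i))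
    (hdom : ∀ i, DominatesIco (T i) 1 (nb i)) :
    (starlikeTree l nb).IsDominatingSet ↑(insert none (ofBranchSets nb T)) := by
  rintro (_ | ⟨i, j⟩)
  · exact Or.inl (mem_insert_self _ _)
  · by_cases hj : (j : ℕ) = 0
    · exact Or.inr ⟨none, mem_insert_self _ _, adj_none_some hj⟩
    · rcases dominated_of_dominatesIco hT (hdom i) (j := j) (by omega) with hin | ⟨u, hu, hadj⟩
      · exact Or.inl (mem_insert_of_mem hin)
      · exact Or.inr ⟨u, mem_insert_of_mem hu, hadj⟩

theorem isDominatingSet_ofBranchSets (hT : ∀ i, T i ⊆ range (nb i))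
    (hdom : ∀ i, DominatesIco (T i) 0 (nb i)) (h0 : ∃ i, 0 ∈ T i) :
    (starlikeTree l nb).IsDominatingSet ↑(ofBranchSets nb T) := by
  rintro (_ | ⟨i, j⟩)
  · obtain ⟨i, hi⟩ := h0
    have hn : 0 < nb i := mem_range.1 (hT i hi)
    exact Or.inr ⟨some ⟨i, ⟨0, hn⟩⟩, some_mem_ofBranchSets.2 hi,
      (adj_none_some rfl).symm⟩
  · exact dominated_of_dominatesIco hT (hdom i) (Nat.zero_le _)

end upper

theorem dominationNumber_le_sum_add_one (l : ℕ) (nb : Fin l → ℕ) :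
    (starlikeTree l nb).dominationNumber ≤ ∑ i, (nb i + 1) / 3 + 1 :=
  calc (starlikeTree l nb).dominationNumber
      ≤ #(insert none (ofBranchSets nb fun i => tailDominator (nb i))) :=
        dominationNumber_le (isDominatingSet_insert_none_ofBranchSets
          (fun i => tailDominator_subset (nb i)) (fun i => dominatesIco_tailDominator (nb i)))
    _ ≤ #(ofBranchSets nb fun i => tailDominator (nb i)) + 1 := card_insert_le _ _
    _ ≤ ∑ i, (nb i + 1) / 3 + 1 := by
        gcongr
        exact (card_ofBranchSets_le _).trans (sum_le_sum fun i _ => card_tailDominator_le _)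

theorem dominationNumber_le_sum (h1 : ∀ i, nb i % 3 ≠ 1) (h2 : ∃ i, nb i % 3 = 2) :
    (starlikeTree l nb).dominationNumber ≤ ∑ i, (nb i + 1) / 3 := by
  obtain ⟨i₂, hi₂⟩ := h2
  calc (starlikeTree l nb).dominationNumber
      ≤ #(ofBranchSets nb fun i => fullDominator (nb i)) :=
        dominationNumber_le (isDominatingSet_ofBranchSets (fun i => fullDominator_subset (nb i))
          (fun i => dominatesIco_fullDominator (h1 i)) ⟨i₂, zero_mem_fullDominator hi₂⟩)
    _ ≤ ∑ i, (nb i + 1) / 3 :=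
        (card_ofBranchSets_le _).trans (sum_le_sum fun i _ => card_fullDominator_le _)

theorem dominationNumber_eq_sum_add_one (h : (∃ i, nb i % 3 = 1) ∨ ∀ i, nb i % 3 = 0) :
    (starlikeTree l nb).dominationNumber = ∑ i, (nb i + 1) / 3 + 1 :=
  le_antisymm (dominationNumber_le_sum_add_one l nb)
    (le_dominationNumber fun _ hD => sum_add_one_le_card hD h)

theorem dominationNumber_eq_sum (h1 : ∀ i, nb i % 3 ≠ 1) (h2 : ∃ i, nb i % 3 = 2) :
    (starlikeTree l nb).dominationNumber = ∑ i, (nb i + 1) / 3 :=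
  le_antisymm (dominationNumber_le_sum h1 h2) (le_dominationNumber fun _ hD => sum_le_card hD)

end starlikeTree

theorem dominationNumber_starlikeTree_general (l : ℕ) (nb : Fin l → ℕ)
    (r s : ℕ)
    (hr : r = (Finset.univ.filter (fun i : Fin l => nb i % 3 = 1)).card)
    (hs : s = (Finset.univ.filter (fun i : Fin l => nb i % 3 = 2)).card) :
    (starlikeTree l nb).dominationNumber =
      if 1 ≤ r then (∑ i : Fin l, (nb i + 2) / 3) - (r - 1)
      else if 1 ≤ s then ∑ i : Fin l, (nb i + 2) / 3
      else (∑ i : Fin l, (nb i + 2) / 3) + 1 := by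
  have hceil : ∑ i, (nb i + 2) / 3 = ∑ i, (nb i + 1) / 3 + r := by
    rw [hr, card_filter, ← sum_add_distrib]
    exact sum_congr rfl fun i _ => by split_ifs <;> omega
  by_cases hr1 : 1 ≤ r
  · obtain ⟨i, -, hi⟩ := filter_nonempty_iff.1 (card_pos.1 (hr ▸ hr1))
    rw [if_pos hr1, starlikeTree.dominationNumber_eq_sum_add_one (Or.inl ⟨i, hi⟩)]
    omega
  have hr0 : ∀ i, nb i % 3 ≠ 1 := fun i hi =>
    hr1 (hr ▸ card_pos.2 ⟨i, mem_filter.2 ⟨mem_univ i, hi⟩⟩)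
  rw [if_neg hr1]
  by_cases hs1 : 1 ≤ s
  · obtain ⟨i, -, hi⟩ := filter_nonempty_iff.1 (card_pos.1 (hs ▸ hs1))
    rw [if_pos hs1, starlikeTree.dominationNumber_eq_sum hr0 ⟨i, hi⟩]
    omega
  have hs0 : ∀ i, nb i % 3 ≠ 2 := fun i hi =>
    hs1 (hs ▸ card_pos.2 ⟨i, mem_filter.2 ⟨mem_univ i, hi⟩⟩)
  rw [if_neg hs1, starlikeTree.dominationNumber_eq_sum_add_one
    (Or.inr fun i => by have := hr0 i; have := hs0 i; omega)]
  omega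

/-- **Theorem (domination number of a starlike tree).** Let `S = S(n₁, …, n_l)` be a
starlike tree, let `r` be the number of branches whose order is `≡ 1 (mod 3)` and `s` the
number of branches whose order is `≡ 2 (mod 3)`.  Then
`γ(S) = Σ ⌈nᵢ/3⌉ - (r - 1)` if `r ≥ 1`, `γ(S) = Σ ⌈nᵢ/3⌉` if `r = 0` and `s ≥ 1`, and
`γ(S) = Σ ⌈nᵢ/3⌉ + 1` if `r = s = 0`. -/
theorem dominationNumber_starlikeTree (l : ℕ) (nb : Fin l → ℕ) (hnb : ∀ i, 1 ≤ nb i)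
    (r s : ℕ)
    (hr : r = (Finset.univ.filter (fun i : Fin l => nb i % 3 = 1)).card)
    (hs : s = (Finset.univ.filter (fun i : Fin l => nb i % 3 = 2)).card) :
    (starlikeTree l nb).dominationNumber =
      if 1 ≤ r then (∑ i : Fin l, (nb i + 2) / 3) - (r - 1)
      else if 1 ≤ s then ∑ i : Fin l, (nb i + 2) / 3
      else (∑ i : Fin l, (nb i + 2) / 3) + 1 :=
  dominationNumber_starlikeTree_general l nb r s hr hs
end
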